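/- Let a, b, c be integers with 2 ≤ a ≤ b ≤ c. Then m(a,b,c) > 0 if and only if either c ≥ a + b + 1, or a = 2, c = b + 2 and b is even. -/

import Mathlib

/-- `mF a b c = F(a)² + F(b)² + F(c)² − 3·F(a)·F(b)·F(c)` as an integer. -/
def mF (a b c : ℕ) : ℤ :=
  (Nat.fib a : ℤ) ^ 2 + (Nat.fib b : ℤ) ^ 2 + (Nat.fib c : ℤ) ^ 2 -
    3 * (Nat.fib a : ℤ) * (Nat.fib b : ℤ) * (Nat.fib c : ℤ)

lemma fib_cast_add_two (n : ℕ) : (Nat.fib (n+2) : ℤ) = Nat.fib n + Nat.fib (n+1) := by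
  have := Nat.fib_add_two (n := n); exact_mod_cast this

lemma cassini (n : ℕ) : (Nat.fib (n+2) : ℤ) * Nat.fib n = (Nat.fib (n+1) : ℤ)^2 + (-1)^(n+1) := by
  induction n with
  | zero => simp [Nat.fib]
  | succ n ih =>
    have hA := fib_cast_add_two n
    have hD := fib_cast_add_two (n+1)
    rw [pow_succ (-1 : ℤ) (n+1)]
    linear_combination (Nat.fib (n+1) : ℤ) * hD - (Nat.fib (n+2) : ℤ) * hA - ih

lemma three_fib_le (n : ℕ) : 3 * Nat.fib (n+2) ≤ 2 * Nat.fib (n+3) := by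
  have h1 : Nat.fib (n+3) = Nat.fib (n+1) + Nat.fib (n+2) := Nat.fib_add_two
  have h2 : Nat.fib (n+2) = Nat.fib n + Nat.fib (n+1) := Nat.fib_add_two
  have h3 : Nat.fib n ≤ Nat.fib (n+1) := Nat.fib_mono (by omega)
  omega

lemma conv (B C u z v : ℤ) (huz : u ≤ z) (hzv : z ≤ v)
    (hu : u^2 - B*u + C ≤ 0) (hv : v^2 - B*v + C ≤ 0) : z^2 - B*z + C ≤ 0 := by
  have key : (v-u)*(z^2-B*z+C) = (z-u)*(v^2-B*v+C) + (v-z)*(u^2-B*u+C) - (z-u)*(v-z)*(v-u) := by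
    ring
  rcases eq_or_lt_of_le (huz.trans hzv) with h | h
  · have hz : z = u := le_antisymm (h ▸ hzv) huz
    rw [hz]; exact hu
  · by_contra hpos
    push_neg at hpos
    have h1 : (z-u)*(v^2-B*v+C) ≤ 0 := mul_nonpos_of_nonneg_of_nonpos (by linarith) hv
    have h2 : (v-z)*(u^2-B*u+C) ≤ 0 := mul_nonpos_of_nonneg_of_nonpos (by linarith) hu
    have h3 : 0 ≤ (z-u)*(v-z)*(v-u) :=
      mul_nonneg (mul_nonneg (by linarith) (by linarith)) (by linarith)
    have h4 : 0 < (v-u)*(z^2-B*z+C) := mul_pos (by linarith) hpos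
    linarith

lemma fib_one_le (n : ℕ) (h : 1 ≤ n) : 1 ≤ (Nat.fib n : ℤ) := by
  exact_mod_cast Nat.fib_pos.2 (by omega)

lemma fib_le_fib (m n : ℕ) (h : m ≤ n) : (Nat.fib m : ℤ) ≤ Nat.fib n := by
  exact_mod_cast Nat.fib_mono h


set_option maxHeartbeats 1600000 in
/-- Let `2 ≤ a ≤ b ≤ c`. Then `m(a,b,c) > 0` if and only if either `c ≥ a + b + 1`,
or `a = 2`, `c = b + 2` and `b` is even. -/
theorem mF_pos_iff (a b c : ℕ) (ha : 2 ≤ a) (hab : a ≤ b) (hbc : b ≤ c) :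
    0 < mF a b c ↔ (a + b + 1 ≤ c ∨ (a = 2 ∧ c = b + 2 ∧ Even b)) := by
  constructor
  · intro hpos
    by_contra hcon
    push_neg at hcon
    obtain ⟨hc1, hc2⟩ := hcon
    have hcub : c ≤ a + b := by omega
    rcases Nat.lt_or_ge a 3 with ha2 | ha3
    · -- a = 2
      have ha' : a = 2 := by omega
      subst ha'
      obtain ⟨b', rfl⟩ : ∃ b', b = b' + 2 := ⟨b - 2, by omega⟩
      have hy1 : 1 ≤ (Nat.fib (b'+2) : ℤ) := fib_one_le _ (by omega)
      have hr1 : 1 ≤ (Nat.fib (b'+1) : ℤ) := fib_one_le _ (by omega)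
      have hs0 : 0 ≤ (Nat.fib b' : ℤ) := by positivity
      have hyrec := fib_cast_add_two b'
      have hzrec := fib_cast_add_two (b'+1)
      have hz2rec := fib_cast_add_two (b'+2)
      unfold mF at hpos
      rcases (show c = b' + 2 ∨ c = b' + 3 ∨ c = b' + 4 by omega) with rfl | rfl | rfl
      · simp only [Nat.fib_two] at hpos
        push_cast at hpos
        nlinarith [hpos, hy1]
      · simp only [Nat.fib_two] at hpos
        push_cast at hpos
        nlinarith [hpos, hyrec, hzrec, hy1, hr1, hs0]
      · have hodd : ¬ Even (b' + 2) := hc2 rfl rfl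
        have heven : Even (b' + 3) := (Nat.not_even_iff_odd.1 hodd).add_one
        have hc := cassini (b'+2)
        rw [show b' + 2 + 1 = b' + 3 from rfl, Even.neg_one_pow heven] at hc
        simp only [Nat.fib_two] at hpos
        push_cast at hpos
        have hm : (1:ℤ) + (Nat.fib (b'+2):ℤ)^2 + (Nat.fib (b'+4):ℤ)^2
            - 3 * 1 * (Nat.fib (b'+2):ℤ) * (Nat.fib (b'+4):ℤ) = 0 := by
          linear_combination ((Nat.fib (b'+4):ℤ) - Nat.fib (b'+2) + Nat.fib (b'+3)) * hz2rec - hc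
        nlinarith [hpos, hm]
    · -- a ≥ 3
      obtain ⟨a', rfl⟩ : ∃ a', a = a' + 3 := ⟨a - 3, by omega⟩
      obtain ⟨b', rfl⟩ : ∃ b', b = b' + 3 := ⟨b - 3, by omega⟩
      have hx2 : 2 ≤ (Nat.fib (a'+3) : ℤ) := by
        have : (Nat.fib 3 : ℤ) ≤ (Nat.fib (a'+3) : ℤ) := fib_le_fib 3 (a'+3) (by omega)
        simpa [show Nat.fib 3 = 2 by rfl] using this
      have hxy : (Nat.fib (a'+3) : ℤ) ≤ Nat.fib (b'+3) := fib_le_fib _ _ (by omega)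
      have hyz : (Nat.fib (b'+3) : ℤ) ≤ Nat.fib c := fib_le_fib _ _ hbc
      have hzw : (Nat.fib c : ℤ) ≤ Nat.fib (a'+3+(b'+3)) := fib_le_fib _ _ (by omega)
      have hyw : (Nat.fib (b'+3) : ℤ) ≤ Nat.fib (a'+3+(b'+3)) := le_trans hyz hzw
      have hxw : (Nat.fib (a'+3) : ℤ) ≤ Nat.fib (a'+3+(b'+3)) := le_trans hxy hyw
      have hy0 : (0:ℤ) ≤ Nat.fib (b'+3) := by positivity
      have hx0 : (0:ℤ) ≤ Nat.fib (a'+3) := by positivity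
      have hy1 : (1:ℤ) ≤ Nat.fib (b'+3) := fib_one_le _ (by omega)
      have hw0 : (0:ℤ) ≤ Nat.fib (a'+3+(b'+3)) := le_trans hy0 hyw
      have hfa1 : 1 ≤ (Nat.fib (a'+1) : ℤ) := fib_one_le _ (by omega)
      have hfb1 : 1 ≤ (Nat.fib (b'+1) : ℤ) := fib_one_le _ (by omega)
      have hxrec : (Nat.fib (a'+3) : ℤ) = Nat.fib (a'+1) + Nat.fib (a'+2) := fib_cast_add_two (a'+1)
      have hyrec : (Nat.fib (b'+3) : ℤ) = Nat.fib (b'+1) + Nat.fib (b'+2) := fib_cast_add_two (b'+1)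
      have h4rec : (Nat.fib (b'+4) : ℤ) = Nat.fib (b'+2) + Nat.fib (b'+3) := fib_cast_add_two (b'+2)
      have hw : (Nat.fib (a'+3+(b'+3)) : ℤ)
          = (Nat.fib (a'+2) : ℤ) * Nat.fib (b'+3) + (Nat.fib (a'+3) : ℤ) * Nat.fib (b'+4) := by
        have := Nat.fib_add (a'+2) (b'+3)
        rw [show a'+2+(b'+3)+1 = a'+3+(b'+3) from by omega] at this
        exact_mod_cast this
      unfold mF at hpos
      set x := (Nat.fib (a'+3) : ℤ)
      set y := (Nat.fib (b'+3) : ℤ)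
      set z := (Nat.fib c : ℤ)
      set w := (Nat.fib (a'+3+(b'+3)) : ℤ)
      set fa1 := (Nat.fib (a'+1) : ℤ)
      set fb1 := (Nat.fib (b'+1) : ℤ)
      clear_value x y z w fa1 fb1
      have e : 3*x*y - w = y * fa1 + x * fb1 := by
        linear_combination (-1)*hw - x*h4rec + y*hxrec + x*hyrec
      have t1 : y^2 ≤ w * (y * fa1) := by
        nlinarith [mul_nonneg (mul_nonneg (sub_nonneg.2 hyw) hy0) (le_trans zero_le_one hfa1),
          mul_nonneg (mul_nonneg hy0 hy0) (sub_nonneg.2 hfa1)]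
      have t2 : x^2 ≤ w * (x * fb1) := by
        nlinarith [mul_nonneg (mul_nonneg (sub_nonneg.2 hxw) hx0) (le_trans zero_le_one hfb1),
          mul_nonneg (mul_nonneg hx0 hx0) (sub_nonneg.2 hfb1)]
      have e2 : (3*x*y)*w = w*w + w*(y*fa1) + w*(x*fb1) := by linear_combination w*e
      have hfv : w^2 - (3*x*y)*w + (x^2 + y^2) ≤ 0 := by nlinarith [e2, t1, t2]
      have hfu : y^2 - (3*x*y)*y + (x^2 + y^2) ≤ 0 := by
        nlinarith [mul_nonneg (sub_nonneg.2 hx2) (mul_nonneg hy0 hy0),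
          mul_nonneg (mul_nonneg hx0 hy0) (sub_nonneg.2 hy1),
          mul_nonneg hx0 (sub_nonneg.2 hxy)]
      have hfz := conv (3*x*y) (x^2+y^2) y z w hyz hzw hfu hfv
      nlinarith [hpos, hfz]
  · rintro (hge | ⟨rfl, rfl, hbe⟩)
    · obtain ⟨a', rfl⟩ : ∃ a', a = a' + 2 := ⟨a - 2, by omega⟩
      obtain ⟨b', rfl⟩ : ∃ b', b = b' + 2 := ⟨b - 2, by omega⟩
      have k1 := three_fib_le a'
      have k2 := three_fib_le b'
      have k3 : 9 * (Nat.fib (a'+2) * Nat.fib (b'+2)) ≤ 4 * (Nat.fib (a'+3) * Nat.fib (b'+3)) := by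
        calc 9 * (Nat.fib (a'+2) * Nat.fib (b'+2)) = (3*Nat.fib (a'+2)) * (3*Nat.fib (b'+2)) := by ring
        _ ≤ (2*Nat.fib (a'+3)) * (2*Nat.fib (b'+3)) := Nat.mul_le_mul k1 k2
        _ = 4 * (Nat.fib (a'+3) * Nat.fib (b'+3)) := by ring
      have hadd := Nat.fib_add (a'+2) (b'+2)
      have hmono : Nat.fib (a'+2+(b'+2)+1) ≤ Nat.fib c := Nat.fib_mono (by omega)
      have hB : 3 * (Nat.fib (a'+2) * Nat.fib (b'+2)) ≤ Nat.fib c := by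
        have h1 : Nat.fib (a'+2+1) = Nat.fib (a'+3) := rfl
        have h2 : Nat.fib (b'+2+1) = Nat.fib (b'+3) := rfl
        rw [h1, h2] at hadd
        set m := Nat.fib (a'+2) * Nat.fib (b'+2)
        set n := Nat.fib (a'+3) * Nat.fib (b'+3)
        omega
      have hBz : 3 * (Nat.fib (a'+2) : ℤ) * Nat.fib (b'+2) ≤ Nat.fib c := by
        have : ((3 * (Nat.fib (a'+2) * Nat.fib (b'+2)) : ℕ) : ℤ) ≤ (Nat.fib c : ℤ) := by
          exact_mod_cast hB
        push_cast at this; linarith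
      have hx1 : 1 ≤ (Nat.fib (a'+2) : ℤ) := fib_one_le _ (by omega)
      have hy1 : 1 ≤ (Nat.fib (b'+2) : ℤ) := fib_one_le _ (by omega)
      have hz0 : (0:ℤ) ≤ Nat.fib c := by positivity
      unfold mF
      nlinarith [mul_nonneg hz0 (sub_nonneg.2 hBz), hx1, hy1]
    · obtain ⟨b', rfl⟩ : ∃ b', b = b' + 2 := ⟨b - 2, by omega⟩
      have hodd : Odd (b' + 3) := by
        rcases hbe with ⟨k, hk⟩
        exact ⟨b' / 2 + 1, by omega⟩
      have hc := cassini (b'+2)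
      rw [show b' + 2 + 1 = b' + 3 from rfl, Odd.neg_one_pow hodd] at hc
      have hz2rec := fib_cast_add_two (b'+2)
      unfold mF
      simp only [Nat.fib_two]
      push_cast
      have hm : (1:ℤ) + (Nat.fib (b'+2):ℤ)^2 + (Nat.fib (b'+4):ℤ)^2
          - 3 * 1 * (Nat.fib (b'+2):ℤ) * (Nat.fib (b'+4):ℤ) = 2 := by
        linear_combination ((Nat.fib (b'+4):ℤ) - Nat.fib (b'+2) + Nat.fib (b'+3)) * hz2rec - hc
      nlinarith [hm]
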